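/- arXiv:1604.00548 — 2 statements merged into one kernel-verified Lean document; each statement's English description precedes it below -/
import Mathlib

section
/- Let T > 0, let f : ℝ^n × ℝ^m → ℝ^n be continuous, let φ : ℝ × ℝ^n × ℝ^m → ℝ^n be a flow map such that φ(0, x₀, θ) = x₀ and, for every (x₀, θ) and every t ∈ [0,T], t ↦ φ(t, x₀, θ) has derivative f(φ(t, x₀, θ), θ) at t. Let μ₀ be a finite measure on ℝ^n × ℝ^m. Define the terminal measure μ_T as the pushforward of μ₀ under (x₀, θ) ↦ (φ(T, x₀, θ), θ), and the average occupation measure μ on ℝ × ℝ^n × ℝ^m by μ(A) = ∫ (Lebesgue measure of { t ∈ [0,T] : (t, φ(t, x₀, θ), θ) ∈ A }) dμ₀(x₀, θ). Then for every continuously differentiable v : ℝ × ℝ^n × ℝ^m → ℝ with v and L_f v bounded on the relevant sets (e.g. v ∈ C¹ with compact support), the Liouville equation holds: ∫ v(T, y, θ) dμ_T(y, θ) = ∫ v(0, x₀, θ) dμ₀(x₀, θ) + ∫ L_f v(t, x, θ) dμ(t, x, θ). -/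
/-!
Along each trajectory `t ↦ (t, φ(t, x₀, θ), θ)` the derivative of `v` is `L_f v` by the chain
rule, so the fundamental theorem of calculus gives
`∫₀ᵀ L_f v(t, φ(t, x₀, θ), θ) dt = v(T, φ(T, x₀, θ), θ) - v(0, x₀, θ)`.
The occupation measure is the pushforward of `dt|_[0,T] ⊗ μ₀` under `(t, x₀, θ) ↦ (t, φ, θ)`,
so integrating this identity against `μ₀` (Fubini) gives the Liouville equation.
-/

open MeasureTheory Set

/-- The Lie derivative of `v` along the parametrized vector field `f` (with `θ̇ = 0`). -/
noncomputable def lieDeriv {n m : ℕ} (f : (Fin n → ℝ) → (Fin m → ℝ) → (Fin n → ℝ))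
    (v : ℝ × (Fin n → ℝ) × (Fin m → ℝ) → ℝ)
    (p : ℝ × (Fin n → ℝ) × (Fin m → ℝ)) : ℝ :=
  fderiv ℝ v p (1, f p.2.1 p.2.2, 0)

theorem MeasureTheory.Measure.eq_map_prod_of_lintegral_measure_preimage
    {τ α β : Type*} [MeasurableSpace τ] [MeasurableSpace α] [MeasurableSpace β]
    (ρ : Measure τ) [SFinite ρ] (ν : Measure α) [SFinite ν] {s : Set τ} (hs : MeasurableSet s)
    {g : τ × α → β} (hg : Measurable g) {μ : Measure β}
    (hμ : ∀ A, MeasurableSet A → μ A = ∫⁻ p, ρ {t ∈ s | g (t, p) ∈ A} ∂ν) :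
    μ = (ρ.restrict s |>.prod ν).map g := by
  ext A hA
  rw [Measure.map_apply hg hA, hμ A hA, Measure.prod_apply_symm (hg hA)]
  refine lintegral_congr fun p => ?_
  rw [Measure.restrict_apply' hs, inter_comm]
  rfl

theorem Continuous.integrable_comp_of_hasCompactSupport {α β : Type*} [MeasurableSpace α]
    [TopologicalSpace β] [MeasurableSpace β] [OpensMeasurableSpace β]
    {K : β → ℝ} (hK : Continuous K) (hKs : HasCompactSupport K) {Φ : α → β} (hΦ : Measurable Φ)
    (ν : Measure α) [IsFiniteMeasure ν] : Integrable (fun a => K (Φ a)) ν :=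
  (hK.integrable_of_hasCompactSupport hKs).comp_measurable hΦ

section LieDerivative

variable {n m : ℕ} {f : (Fin n → ℝ) → (Fin m → ℝ) → (Fin n → ℝ)}
  {v : ℝ × (Fin n → ℝ) × (Fin m → ℝ) → ℝ}

theorem continuous_lieDeriv (hf : Continuous fun p : (Fin n → ℝ) × (Fin m → ℝ) => f p.1 p.2)
    (hv : ContDiff ℝ 1 v) : Continuous (lieDeriv f v) :=
  (hv.continuous_fderiv one_ne_zero).clm_apply <|
    continuous_const.prodMk ((hf.comp continuous_snd).prodMk continuous_const)

theorem HasCompactSupport.lieDeriv (hv : HasCompactSupport v) :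
    HasCompactSupport (lieDeriv f v) :=
  (hv.fderiv ℝ).mono <| Function.support_subset_iff'.2 fun p hp => by
    simp [_root_.lieDeriv, Function.notMem_support.1 hp]

theorem hasDerivAt_lieDeriv_along {γ : ℝ → Fin n → ℝ} {θ : Fin m → ℝ} {t : ℝ}
    (hv : DifferentiableAt ℝ v (t, γ t, θ)) (hγ : HasDerivAt γ (f (γ t) θ) t) :
    HasDerivAt (fun s => v (s, γ s, θ)) (lieDeriv f v (t, γ t, θ)) t :=
  hv.hasFDerivAt.comp_hasDerivAt t <| (hasDerivAt_id t).prodMk (hγ.prodMk (hasDerivAt_const t θ))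

theorem integral_lieDeriv_along {T : ℝ} (hT : 0 ≤ T)
    (hf : Continuous fun p : (Fin n → ℝ) × (Fin m → ℝ) => f p.1 p.2) (hv : ContDiff ℝ 1 v)
    {γ : ℝ → Fin n → ℝ} {θ : Fin m → ℝ} (hγ : ∀ t ∈ Icc 0 T, HasDerivAt γ (f (γ t) θ) t) :
    ∫ t in Icc 0 T, lieDeriv f v (t, γ t, θ) = v (T, γ T, θ) - v (0, γ 0, θ) := by
  have hγcont : ContinuousOn γ (Icc 0 T) := fun t ht => (hγ t ht).continuousAt.continuousWithinAt
  have hint : IntervalIntegrable (fun t => lieDeriv f v (t, γ t, θ)) volume 0 T := by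
    refine ContinuousOn.intervalIntegrable ?_
    rw [uIcc_of_le hT]
    exact (continuous_lieDeriv hf hv).comp_continuousOn
      (continuousOn_id.prodMk (hγcont.prodMk continuousOn_const))
  have hderiv : ∀ t ∈ uIcc 0 T,
      HasDerivAt (fun s => v (s, γ s, θ)) (lieDeriv f v (t, γ t, θ)) t := by
    intro t ht
    rw [uIcc_of_le hT] at ht
    exact hasDerivAt_lieDeriv_along (hv.differentiable one_ne_zero _) (hγ t ht)
  rw [integral_Icc_eq_integral_Ioc, ← intervalIntegral.integral_of_le hT,
    intervalIntegral.integral_eq_sub_of_hasDerivAt hderiv hint]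

end LieDerivative

/-- The Liouville equation: with `μ_T` the pushforward of `μ₀` under the time-`T` flow
and `μ` the average occupation measure, for every `C¹` test function `v` with compact
support, `∫ v(T,·) dμ_T = ∫ v(0,·) dμ₀ + ∫ L_f v dμ`. -/
theorem liouville_equation {n m : ℕ} (T : ℝ) (hT : 0 < T)
    (f : (Fin n → ℝ) → (Fin m → ℝ) → (Fin n → ℝ))
    (hf : Continuous fun p : (Fin n → ℝ) × (Fin m → ℝ) => f p.1 p.2)
    (φ : ℝ → (Fin n → ℝ) → (Fin m → ℝ) → (Fin n → ℝ))
    (hφmeas : Measurable fun q : ℝ × (Fin n → ℝ) × (Fin m → ℝ) => φ q.1 q.2.1 q.2.2)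
    (hφ0 : ∀ (x₀ : Fin n → ℝ) (θ : Fin m → ℝ), φ 0 x₀ θ = x₀)
    (hφode : ∀ (x₀ : Fin n → ℝ) (θ : Fin m → ℝ), ∀ t ∈ Icc (0 : ℝ) T,
      HasDerivAt (fun s => φ s x₀ θ) (f (φ t x₀ θ) θ) t)
    (μ₀ : Measure ((Fin n → ℝ) × (Fin m → ℝ))) [IsFiniteMeasure μ₀]
    (μT : Measure ((Fin n → ℝ) × (Fin m → ℝ)))
    (hμT : μT = Measure.map (fun p : (Fin n → ℝ) × (Fin m → ℝ) => (φ T p.1 p.2, p.2)) μ₀)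
    (μ : Measure (ℝ × (Fin n → ℝ) × (Fin m → ℝ)))
    (hμ : ∀ A : Set (ℝ × (Fin n → ℝ) × (Fin m → ℝ)), MeasurableSet A →
      μ A = ∫⁻ p : (Fin n → ℝ) × (Fin m → ℝ),
        volume {t ∈ Icc (0 : ℝ) T | (t, φ t p.1 p.2, p.2) ∈ A} ∂μ₀)
    (v : ℝ × (Fin n → ℝ) × (Fin m → ℝ) → ℝ)
    (hv : ContDiff ℝ 1 v) (hvsupp : HasCompactSupport v) :
    ∫ p, v (T, p.1, p.2) ∂μT = ∫ p, v (0, p.1, p.2) ∂μ₀ + ∫ q, lieDeriv f v q ∂μ := by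
  have hΦ : Measurable fun q : ℝ × (Fin n → ℝ) × (Fin m → ℝ) => (q.1, φ q.1 q.2.1 q.2.2, q.2.2) :=
    measurable_fst.prodMk (hφmeas.prodMk (measurable_snd.comp measurable_snd))
  have hφT : Measurable fun p : (Fin n → ℝ) × (Fin m → ℝ) => (φ T p.1 p.2, p.2) :=
    (hφmeas.comp (measurable_const.prodMk measurable_id)).prodMk measurable_snd
  have hK := continuous_lieDeriv hf hv
  have hμ_eq := Measure.eq_map_prod_of_lintegral_measure_preimage volume μ₀ measurableSet_Icc hΦ hμ
  have hint_T : Integrable (fun p => v (T, φ T p.1 p.2, p.2)) μ₀ :=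
    hv.continuous.integrable_comp_of_hasCompactSupport hvsupp (measurable_const.prodMk hφT) μ₀
  have hint_0 : Integrable (fun p => v (0, p.1, p.2)) μ₀ :=
    hv.continuous.integrable_comp_of_hasCompactSupport hvsupp
      (measurable_const.prodMk measurable_id) μ₀
  have hint_K : Integrable (fun q => lieDeriv f v (q.1, φ q.1 q.2.1 q.2.2, q.2.2))
      ((volume.restrict (Icc 0 T)).prod μ₀) :=
    hK.integrable_comp_of_hasCompactSupport hvsupp.lieDeriv hΦ _
  have hocc : ∫ q, lieDeriv f v q ∂μ = ∫ p, (v (T, φ T p.1 p.2, p.2) - v (0, p.1, p.2)) ∂μ₀ := by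
    rw [hμ_eq, integral_map hΦ.aemeasurable hK.aestronglyMeasurable, integral_prod_symm _ hint_K]
    refine integral_congr_ae (ae_of_all _ fun p => ?_)
    simpa only [hφ0] using integral_lieDeriv_along hT.le hf hv (hφode p.1 p.2)
  have hμT_integral : ∫ p, v (T, p.1, p.2) ∂μT = ∫ p, v (T, φ T p.1 p.2, p.2) ∂μ₀ := by
    have hvT : Continuous fun p : (Fin n → ℝ) × (Fin m → ℝ) => v (T, p.1, p.2) :=
      hv.continuous.comp' (continuous_const.prodMk (continuous_fst.prodMk continuous_snd))
    rw [hμT, integral_map hφT.aemeasurable hvT.aestronglyMeasurable]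
  rw [hμT_integral, hocc, integral_sub hint_T hint_0, add_sub_cancel]
end

section
/- Let X ⊆ ℝ^n and Θ ⊆ ℝ^m be compact, X_T ⊆ X, T > 0, and f : ℝ^n × ℝ^m → ℝ^n continuous. Suppose (v, w) with v ∈ C¹(ℝ × ℝ^n × ℝ^m, ℝ) and w : ℝ^n × ℝ^m → ℝ continuous is feasible for the dual problem (D), i.e.: L_f v(t,x,θ) ≤ 0 for all (t,x,θ) ∈ [0,T] × X × Θ; w(x,θ) ≥ 0 for all (x,θ) ∈ X × Θ; w(x,θ) ≥ 1 + v(0,x,θ) for all (x,θ) ∈ X × Θ; and v(T,x,θ) ≥ 0 for all (x,θ) ∈ X_T × Θ. If (x₀, θ) ∈ X × Θ is such that there exists a trajectory γ : [0,T] → ℝ^n with γ(0) = x₀, γ'(t) = f(γ(t), θ) and γ(t) ∈ X for all t ∈ [0,T], and γ(T) ∈ X_T, then w(x₀, θ) ≥ 1. In particular, the 1-super-level set { (x,θ) : w(x,θ) ≥ 1 } contains the full backwards reachable set X₀^full. -/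
open MeasureTheory Set

/-!
The dual variable `v` decreases along every trajectory, since its derivative along the
trajectory is the Lie derivative `L_f v ≤ 0`. For a trajectory from `x₀` ending in `X_T`
this gives `v(0, x₀, θ) ≥ v(T, γ(T), θ) ≥ 0`, hence `w(x₀, θ) ≥ 1 + v(0, x₀, θ) ≥ 1`.
-/

section Trajectory

variable {n m : ℕ} {f : (Fin n → ℝ) → (Fin m → ℝ) → (Fin n → ℝ)}
  {v : ℝ × (Fin n → ℝ) × (Fin m → ℝ) → ℝ} {γ : ℝ → Fin n → ℝ} {θ : Fin m → ℝ}

theorem hasDerivAt_comp_trajectory {t : ℝ} (hv : DifferentiableAt ℝ v (t, γ t, θ))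
    (hγ : HasDerivAt γ (f (γ t) θ) t) :
    HasDerivAt (fun s => v (s, γ s, θ)) (lieDeriv f v (t, γ t, θ)) t :=
  hv.hasFDerivAt.comp_hasDerivAt t <|
    (hasDerivAt_id t).prodMk (hγ.prodMk (hasDerivAt_const t θ))

theorem antitoneOn_comp_trajectory {a b : ℝ} (hv : Differentiable ℝ v)
    (hγ : ∀ t ∈ Icc a b, HasDerivAt γ (f (γ t) θ) t)
    (hlie : ∀ t ∈ Ioo a b, lieDeriv f v (t, γ t, θ) ≤ 0) :
    AntitoneOn (fun s => v (s, γ s, θ)) (Icc a b) := by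
  have hderiv t (ht : t ∈ Icc a b) := hasDerivAt_comp_trajectory (hv _) (hγ t ht)
  refine antitoneOn_of_deriv_nonpos (convex_Icc a b)
    (fun t ht => (hderiv t ht).continuousAt.continuousWithinAt) ?_ ?_ <;>
    rw [interior_Icc]
  · exact fun t ht => (hderiv t (Ioo_subset_Icc_self ht)).differentiableAt.differentiableWithinAt
  · intro t ht
    rw [(hderiv t (Ioo_subset_Icc_self ht)).deriv]
    exact hlie t ht

end Trajectory

theorem superlevel_contains_brs_general {n m : ℕ} (T : ℝ) (hT : 0 < T)
    (X : Set (Fin n → ℝ)) (Θ : Set (Fin m → ℝ)) (XT : Set (Fin n → ℝ))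
    (f : (Fin n → ℝ) → (Fin m → ℝ) → (Fin n → ℝ))
    (v : ℝ × (Fin n → ℝ) × (Fin m → ℝ) → ℝ) (hv : ContDiff ℝ 1 v)
    (w : (Fin n → ℝ) × (Fin m → ℝ) → ℝ)
    (hd1 : ∀ t ∈ Icc (0 : ℝ) T, ∀ x ∈ X, ∀ θ ∈ Θ, lieDeriv f v (t, x, θ) ≤ 0)
    (hd3 : ∀ x ∈ X, ∀ θ ∈ Θ, 1 + v (0, x, θ) ≤ w (x, θ))
    (hd4 : ∀ x ∈ XT, ∀ θ ∈ Θ, 0 ≤ v (T, x, θ)) :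
    {p : (Fin n → ℝ) × (Fin m → ℝ) | p ∈ X ×ˢ Θ ∧
        ∃ γ : ℝ → (Fin n → ℝ), γ 0 = p.1 ∧
          (∀ t ∈ Icc (0 : ℝ) T, HasDerivAt γ (f (γ t) p.2) t ∧ γ t ∈ X) ∧
          γ T ∈ XT} ⊆
      {p : (Fin n → ℝ) × (Fin m → ℝ) | 1 ≤ w p} := by
  rintro ⟨x₀, θ⟩ ⟨⟨hx₀, hθ⟩, γ, rfl, hγ, hγT⟩
  have hdecrease : v (T, γ T, θ) ≤ v (0, γ 0, θ) :=
    antitoneOn_comp_trajectory (hv.differentiable one_ne_zero) (fun t ht => (hγ t ht).1)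
      (fun t ht => hd1 t (Ioo_subset_Icc_self ht) _ (hγ t (Ioo_subset_Icc_self ht)).2 θ hθ)
      (left_mem_Icc.2 hT.le) (right_mem_Icc.2 hT.le) hT.le
  have hfinal : 0 ≤ v (T, γ T, θ) := hd4 _ hγT θ hθ
  have hinitial := hd3 _ hx₀ θ hθ
  show 1 ≤ w (γ 0, θ)
  linarith

/-- If `(v, w)` is feasible for the dual problem (D), then the 1-super-level set of `w`
contains the full backwards reachable set: every `(x₀, θ) ∈ X × Θ` whose trajectory stays
in `X` on `[0,T]` and hits `X_T` at time `T` satisfies `w (x₀, θ) ≥ 1`. -/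
theorem superlevel_contains_brs {n m : ℕ} (T : ℝ) (hT : 0 < T)
    (X : Set (Fin n → ℝ)) (Θ : Set (Fin m → ℝ)) (XT : Set (Fin n → ℝ))
    (hX : IsCompact X) (hΘ : IsCompact Θ) (hXT : IsCompact XT) (hXTX : XT ⊆ X)
    (f : (Fin n → ℝ) → (Fin m → ℝ) → (Fin n → ℝ))
    (hf : Continuous fun p : (Fin n → ℝ) × (Fin m → ℝ) => f p.1 p.2)
    (v : ℝ × (Fin n → ℝ) × (Fin m → ℝ) → ℝ) (hv : ContDiff ℝ 1 v)
    (w : (Fin n → ℝ) × (Fin m → ℝ) → ℝ) (hw : Continuous w)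
    (hd1 : ∀ t ∈ Icc (0 : ℝ) T, ∀ x ∈ X, ∀ θ ∈ Θ, lieDeriv f v (t, x, θ) ≤ 0)
    (hd2 : ∀ x ∈ X, ∀ θ ∈ Θ, 0 ≤ w (x, θ))
    (hd3 : ∀ x ∈ X, ∀ θ ∈ Θ, 1 + v (0, x, θ) ≤ w (x, θ))
    (hd4 : ∀ x ∈ XT, ∀ θ ∈ Θ, 0 ≤ v (T, x, θ)) :
    {p : (Fin n → ℝ) × (Fin m → ℝ) | p ∈ X ×ˢ Θ ∧
        ∃ γ : ℝ → (Fin n → ℝ), γ 0 = p.1 ∧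
          (∀ t ∈ Icc (0 : ℝ) T, HasDerivAt γ (f (γ t) p.2) t ∧ γ t ∈ X) ∧
          γ T ∈ XT} ⊆
      {p : (Fin n → ℝ) × (Fin m → ℝ) | 1 ≤ w p} :=
  superlevel_contains_brs_general T hT X Θ XT f v hv w hd1 hd3 hd4
end
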